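/- Let z, p : ℕ → ℚ be sequences with z(2) = 1. Suppose that as formal power series over ℚ, 1 + Σ_{d≥1} (z(d+2)/d!)·x^d = exp( Σ_{k≥1} (p(k)·z(k)/k!)·x^k ). Then for every d ≥ 3, z(d) = Σ_{k=1}^{d−1} z(k)·z(d−k)·p(k)·C(d−3, k−1), where C denotes the binomial coefficient (with C(d−3, d−2) = 0). -/

import Mathlib

/-- Formal exponential of a power series with zero constant term: the `n`-th
coefficient of `exp G = Σ_{k≥0} G^k / k!` (only `k ≤ n` contribute). -/
noncomputable def formalExp (G : PowerSeries ℚ) : PowerSeries ℚ :=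
  PowerSeries.mk fun n =>
    ∑ k ∈ Finset.range (n + 1), PowerSeries.coeff (R := ℚ) n (G ^ k) / (Nat.factorial k)

/-!
Write `F = 1 + Σ_{d≥1} z(d+2) x^d / d!` and `G = Σ_{k≥1} p(k) z(k) x^k / k!`. Since `z 2 = 1`,
`F = Σ_d z(d+2) x^d / d!`. Differentiating `F = exp G` gives `F' = G' F`: coefficientwise,
`exp G` agrees with the partial sums `Σ_{k ≤ N} G^k / k!`, whose derivatives telescope to
`G' Σ_{k ≤ N-1} G^k / k!`. Comparing the coefficients of `x^m` in `F' = G' F` and multiplying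
by `m!` turns the Cauchy product into the binomial convolution
`z(m+3) = Σ_{i ≤ m} C(m,i) z(i+1) z(m+2-i) p(i+1)`, which is the recursion with `d = m+3`,
`k = i+1`.
-/

open PowerSeries Finset Nat

namespace PowerSeries

theorem coeff_pow_eq_zero_of_lt {R : Type*} [CommSemiring R] {G : R⟦X⟧}
    (hG : constantCoeff G = 0) {n k : ℕ} (h : n < k) : coeff n (G ^ k) = 0 :=
  X_pow_dvd_iff.mp (pow_dvd_pow_of_dvd (X_dvd_iff.mpr hG) k) n h

theorem derivative_mk {R : Type*} [CommSemiring R] (f : ℕ → R) :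
    d⁄dX R (mk f) = mk fun n => f (n + 1) * (n + 1) := by
  ext n
  simp [coeff_derivative]

end PowerSeries

noncomputable def expPartialSum (G : ℚ⟦X⟧) (N : ℕ) : ℚ⟦X⟧ :=
  ∑ k ∈ range (N + 1), C ((k ! : ℚ)⁻¹) * G ^ k

theorem coeff_formalExp_eq_coeff_expPartialSum {G : ℚ⟦X⟧} (hG : constantCoeff G = 0)
    {n N : ℕ} (h : n ≤ N) : coeff n (formalExp G) = coeff n (expPartialSum G N) := by
  simp only [formalExp, coeff_mk, expPartialSum, map_sum, coeff_C_mul]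
  rw [← sum_subset (range_subset_range.mpr (by omega) : range (n + 1) ⊆ range (N + 1))]
  · exact sum_congr rfl fun k _ => by rw [div_eq_inv_mul]
  · intro k _ hk
    rw [coeff_pow_eq_zero_of_lt hG (by simpa using hk), mul_zero]

theorem derivative_C_inv_factorial_mul_pow_succ (G : ℚ⟦X⟧) (k : ℕ) :
    d⁄dX ℚ (C (((k + 1) ! : ℚ)⁻¹) * G ^ (k + 1)) = d⁄dX ℚ G * (C ((k ! : ℚ)⁻¹) * G ^ k) := by
  have hfac : ((k + 1 : ℕ) : ℚ) * ((k + 1) ! : ℚ)⁻¹ = (k ! : ℚ)⁻¹ := by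
    rw [factorial_succ, cast_mul, mul_inv, ← mul_assoc, mul_inv_cancel₀ (by positivity), one_mul]
  rw [Derivation.leibniz, derivative_C, smul_zero, add_zero, smul_eq_mul, derivative_pow,
    Nat.add_sub_cancel, ← hfac, map_mul, map_natCast]
  ring

theorem derivative_expPartialSum_succ (G : ℚ⟦X⟧) (N : ℕ) :
    d⁄dX ℚ (expPartialSum G (N + 1)) = d⁄dX ℚ G * expPartialSum G N := by
  rw [expPartialSum, map_sum, sum_range_succ']
  simp only [derivative_C_inv_factorial_mul_pow_succ, pow_zero, mul_one, derivative_C, add_zero,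
    expPartialSum, mul_sum]

theorem derivative_formalExp {G : ℚ⟦X⟧} (hG : constantCoeff G = 0) :
    d⁄dX ℚ (formalExp G) = d⁄dX ℚ G * formalExp G := by
  ext n
  rw [coeff_derivative, coeff_formalExp_eq_coeff_expPartialSum hG le_rfl, ← coeff_derivative,
    derivative_expPartialSum_succ, coeff_mul, coeff_mul]
  refine sum_congr rfl fun ij hij => ?_
  rw [HasAntidiagonal.mem_antidiagonal] at hij
  rw [← coeff_formalExp_eq_coeff_expPartialSum hG (show ij.2 ≤ n by omega)]

theorem div_factorial_succ_mul_succ (a : ℚ) (n : ℕ) : a / (n + 1) ! * (n + 1) = a / n ! := by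
  rw [factorial_succ, cast_mul]
  field_simp
  push_cast
  ring

theorem binomial_convolution_of_derivative_eq (f g : ℕ → ℚ)
    (h : d⁄dX ℚ (mk fun d => f d / d !) = d⁄dX ℚ (mk fun k => g k / k !) * mk fun d => f d / d !)
    (m : ℕ) : f (m + 1) = ∑ i ∈ range (m + 1), m.choose i * g (i + 1) * f (m - i) := by
  have hm := congrArg (coeff m) h
  simp only [derivative_mk, coeff_mul, coeff_mk, sum_antidiagonal_eq_sum_range_succ_mk,
    div_factorial_succ_mul_succ] at hm
  calc f (m + 1) = m ! * (f (m + 1) / m !) := by field_simp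
    _ = ∑ i ∈ range (m + 1), m ! * (g (i + 1) / i ! * (f (m - i) / (m - i) !)) := by
      rw [hm, mul_sum]
    _ = ∑ i ∈ range (m + 1), m.choose i * g (i + 1) * f (m - i) := by
      refine sum_congr rfl fun i hi => ?_
      rw [cast_choose ℚ (Nat.le_of_lt_succ (mem_range.mp hi))]
      field_simp

theorem quiver_dt_recursion_conic (z p : ℕ → ℚ) (hz2 : z 2 = 1)
    (hyp : PowerSeries.mk (fun d => if d = 0 then 1 else z (d + 2) / (Nat.factorial d))
      = formalExp (PowerSeries.mk fun k =>
          if k = 0 then 0 else p k * z k / (Nat.factorial k))) :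
    ∀ d : ℕ, 3 ≤ d → z d = ∑ k ∈ Finset.Icc 1 (d - 1),
      z k * z (d - k) * p k * (Nat.choose (d - 3) (k - 1)) := by
  intro d hd
  obtain ⟨m, rfl⟩ : ∃ m, d = m + 3 := ⟨d - 3, by omega⟩
  set g : ℕ → ℚ := fun k => if k = 0 then 0 else p k * z k
  have hF : (mk fun d => if d = 0 then 1 else z (d + 2) / d !) = mk fun d => z (d + 2) / d ! := by
    ext (_ | _) <;> simp [hz2]
  have hG : (mk fun k => if k = 0 then 0 else p k * z k / k !) = mk fun k => g k / k ! := by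
    ext (_ | _) <;> simp [g]
  have hG0 : constantCoeff (mk fun k => g k / k !) = 0 := by
    simp [← coeff_zero_eq_constantCoeff_apply, g]
  have hconv := binomial_convolution_of_derivative_eq (fun d => z (d + 2)) g
    (by rw [← hF, hyp, hG, derivative_formalExp hG0]) m
  rw [show m + 3 - 1 = m + 2 by omega, ← Ico_add_one_right_eq_Icc, sum_Ico_eq_sum_range,
    show m + 2 + 1 - 1 = m + 1 + 1 by omega, sum_range_succ, show m + 3 - 3 = m by omega,
    show 1 + (m + 1) - 1 = m + 1 by omega, choose_succ_self, cast_zero, mul_zero, add_zero]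
  refine hconv.trans (sum_congr rfl fun i hi => ?_)
  have hi : i ≤ m := Nat.le_of_lt_succ (mem_range.mp hi)
  rw [show 1 + i - 1 = i by omega, show m + 3 - (1 + i) = m - i + 2 by omega, add_comm 1 i]
  simp only [g, add_one_ne_zero, if_false]
  ring
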